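/- Let P be a path with k edges (k ∈ ℕ) whose vertices in order are x_0, x_1, …, x_k, and let L be an m-assignment for P with m ≥ 2. For each (c,d) ∈ L(x_0) × L(x_k), let N(c,d) be the number of proper L-colorings of P coloring x_0 with c and x_k with d. Then there is a partition {A,B} of L(x_0) × L(x_k) with |A| = m and |B| = m(m−1) such that N(c,d) ≥ ((m−1)^k − (−1)^k)/m + (−1)^k for every (c,d) ∈ A, and N(c,d) ≥ ((m−1)^k − (−1)^k)/m for every (c,d) ∈ B. -/

import Mathlib

open SimpleGraph Finset

/-- A proper `L`-coloring of `G`: each vertex gets a color from its list and adjacent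
vertices get different colors. -/
def ProperLColoring {V : Type*} (G : SimpleGraph V) (L : V → Finset ℕ) (f : V → ℕ) : Prop :=
  (∀ v, f v ∈ L v) ∧ ∀ ⦃u w⦄, G.Adj u w → f u ≠ f w

/-- `P(G,L)`: the number of proper `L`-colorings of `G`. -/
noncomputable def PList {V : Type*} (G : SimpleGraph V) (L : V → Finset ℕ) : ℕ :=
  Nat.card {f : V → ℕ // ProperLColoring G L f}

/-- `P(G,m)`: the number of proper colorings of `G` with colors from `{1, …, m}`. -/
noncomputable def PChrom {V : Type*} (G : SimpleGraph V) (m : ℕ) : ℕ :=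
  PList G (fun _ => Finset.Icc 1 m)

/-- The list color function `P_ℓ(G,m)`: the minimum of `P(G,L)` over all `m`-assignments. -/
noncomputable def PListFn {V : Type*} (G : SimpleGraph V) (m : ℕ) : ℕ :=
  sInf {n | ∃ L : V → Finset ℕ, (∀ v, (L v).card = m) ∧ n = PList G L}

/-- `G` is enumeratively chromatic-choosable: `P_ℓ(G,m) = P(G,m)` for all `m ∈ ℕ = {1,2,…}`. -/
def EnumChromChoosable {V : Type*} (G : SimpleGraph V) : Prop :=
  ∀ m : ℕ, 1 ≤ m → PListFn G m = PChrom G m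

/-- Vertices of the theta graph `Θ(l1,l2,l3)`: the end vertices `u = Sum.inl false` and
`v = Sum.inl true`, together with the `lᵢ - 1` internal vertices of the `i`-th path. -/
abbrev ThetaVert (l1 l2 l3 : ℕ) : Type :=
  Bool ⊕ (Σ i : Fin 3, Fin (![l1, l2, l3] i - 1))

/-- Edges of the theta graph (up to symmetrization): the internal vertices of the `i`-th path,
in order, form a path from `u` to `v`; if some path has length 1 then `u` and `v` are adjacent. -/
def thetaRel (l1 l2 l3 : ℕ) : ThetaVert l1 l2 l3 → ThetaVert l1 l2 l3 → Prop :=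
  fun a b =>
    match a, b with
    | Sum.inl false, Sum.inl true => l1 = 1 ∨ l2 = 1 ∨ l3 = 1
    | Sum.inl false, Sum.inr ⟨_, j⟩ => (j : ℕ) = 0
    | Sum.inr ⟨i, j⟩, Sum.inl true => (j : ℕ) + 2 = ![l1, l2, l3] i
    | Sum.inr ⟨i, j⟩, Sum.inr ⟨i', j'⟩ => i = i' ∧ (j : ℕ) + 1 = (j' : ℕ)
    | _, _ => False

/-- The theta graph `Θ(l1,l2,l3)`: two end vertices joined by three internally disjoint
paths of lengths `l1`, `l2`, `l3`. -/
def thetaGraph (l1 l2 l3 : ℕ) : SimpleGraph (ThetaVert l1 l2 l3) :=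
  SimpleGraph.fromRel (thetaRel l1 l2 l3)

/-- A DP-cover `(L, H)` of `G`. -/
structure DPCover {V : Type*} (G : SimpleGraph V) (W : Type*) where
  H : SimpleGraph W
  L : V → Set W
  partition : ∀ w : W, ∃! v : V, w ∈ L v
  matching : ∀ ⦃u v : V⦄, G.Adj u v → ∀ ⦃x y y' : W⦄, x ∈ L u → y ∈ L v → y' ∈ L v →
      H.Adj x y → H.Adj x y' → y = y'
  cross : ∀ ⦃x y : W⦄, H.Adj x y → ∃ u v, G.Adj u v ∧ x ∈ L u ∧ y ∈ L v

/-- A proper `H`-coloring: an independent transversal of the cover. -/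
def DPCover.IsProperColoring {V W : Type*} {G : SimpleGraph V} (C : DPCover G W)
    (T : Set W) : Prop :=
  (∀ v : V, ∃! w : W, w ∈ T ∧ w ∈ C.L v) ∧ ∀ ⦃x y⦄, x ∈ T → y ∈ T → ¬ C.H.Adj x y

/-- `P_DP(G, H)`: the number of proper `H`-colorings of `G`. -/
noncomputable def PDPCount {V W : Type*} {G : SimpleGraph V} (C : DPCover G W) : ℕ :=
  Nat.card {T : Set W // C.IsProperColoring T}

/-- The DP color function `P_DP(G,m)`: the minimum of `P_DP(G,H)` over all `m`-fold covers. -/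
noncomputable def PDP {V : Type*} (G : SimpleGraph V) (m : ℕ) : ℕ :=
  sInf {n | ∃ (W : Type) (C : DPCover G W), (∀ v, Nat.card ↥(C.L v) = m) ∧ n = PDPCount C}

/-- A cover is full if the matching between the lists of adjacent vertices is perfect. -/
def DPCover.IsFull {V W : Type*} {G : SimpleGraph V} (C : DPCover G W) : Prop :=
  ∀ ⦃u v : V⦄, G.Adj u v → ∀ x ∈ C.L u, ∃! y, y ∈ C.L v ∧ C.H.Adj x y

/-!
Fix the colour `c` of `x₀` and grow the path one vertex at a time: the colourings ending in `e`
are the colourings of the shorter path ending in some `d ∈ L(x_{k-1}) \ {e}`. By induction, every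
`c` has a distinguished end colour `g(c) ∈ L(x_k)` with `N(c, g(c)) ≥ aₖ` and `N(c, d) ≥ bₖ` for
`d ≠ g(c)`, where `aₖ`, `bₖ` count the ordinary `m`-colourings of the path with equal, resp.
distinct, end colours. If `g` still lies in the next list it stays distinguished; otherwise a
colour of `L(x_{k+1}) \ L(x_k)` takes its place, since its count sums over all of `L(x_k)`.
The partition is `A = {(c, g(c))}` and its complement.
-/

lemma exists_partition_product_graph {α β : Type*} [DecidableEq α] [DecidableEq β]
    {s : Finset α} {t : Finset β} {g : α → β} (hg : ∀ a ∈ s, g a ∈ t) :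
    ∃ A B : Finset (α × β), Disjoint A B ∧ A ∪ B = s ×ˢ t ∧ #A = #s ∧ #B = #s * (#t - 1) ∧
      (∀ p ∈ A, p.2 = g p.1) ∧ ∀ p ∈ B, p.2 ≠ g p.1 := by
  set A := s.image fun a => (a, g a)
  have hAst : A ⊆ s ×ˢ t := image_subset_iff.2 fun a ha => mem_product.2 ⟨ha, hg a ha⟩
  have hA : #A = #s := card_image_of_injective _ fun a b h => congrArg Prod.fst h
  refine ⟨A, s ×ˢ t \ A, disjoint_sdiff, union_sdiff_of_subset hAst, hA, ?_, ?_, ?_⟩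
  · rw [card_sdiff_of_subset hAst, hA, card_product, Nat.mul_sub_one]
  · simp [A]
  · rintro ⟨a, b⟩ hp (rfl : b = g a)
    exact (mem_sdiff.1 hp).2 (mem_image_of_mem _ (mem_product.1 (mem_sdiff.1 hp).1).1)

section

variable {k : ℕ}

lemma properLColoring_pathGraph_iff (L : Fin (k + 1) → Finset ℕ) (f : Fin (k + 1) → ℕ) :
    ProperLColoring (pathGraph (k + 1)) L f ↔
      (∀ v, f v ∈ L v) ∧ ∀ i : Fin k, f i.castSucc ≠ f i.succ := by
  refine and_congr_right fun _ => ⟨fun h i => h (by simp [pathGraph_adj]), fun h u w huw => ?_⟩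
  rcases pathGraph_adj.1 huw with huw | huw
  · convert h ⟨u, by omega⟩ using 2 <;> ext <;> simp [huw]
  · convert (h ⟨w, by omega⟩).symm using 2 <;> ext <;> simp [huw]

def pathEndColorings (L : Fin (k + 1) → Finset ℕ) (c d : ℕ) : Finset (Fin (k + 1) → ℕ) :=
  {f ∈ Fintype.piFinset L | (∀ i : Fin k, f i.castSucc ≠ f i.succ) ∧ f 0 = c ∧ f (Fin.last k) = d}

lemma natCard_eq_card_pathEndColorings (L : Fin (k + 1) → Finset ℕ) (c d : ℕ) :
    Nat.card {f : Fin (k + 1) → ℕ // ProperLColoring (pathGraph (k + 1)) L f ∧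
      f 0 = c ∧ f (Fin.last k) = d} = #(pathEndColorings L c d) := by
  rw [← Nat.card_eq_finsetCard]
  exact Nat.card_congr <| Equiv.subtypeEquivRight fun f => by
    simp [pathEndColorings, properLColoring_pathGraph_iff, and_assoc]

lemma mem_pathEndColorings_snoc {L : Fin (k + 2) → Finset ℕ} {g : Fin (k + 1) → ℕ} {c e : ℕ} :
    Fin.snoc g e ∈ pathEndColorings L c e ↔
      e ∈ L (Fin.last (k + 1)) ∧ g (Fin.last k) ≠ e ∧
        g ∈ pathEndColorings (Fin.init L) c (g (Fin.last k)) := by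
  simp [pathEndColorings, Fin.forall_fin_succ', Fin.init, -Fin.castSucc_succ, Fin.succ_castSucc]
  tauto

lemma snoc_init_of_mem_pathEndColorings {L : Fin (k + 2) → Finset ℕ} {f : Fin (k + 2) → ℕ}
    {c e : ℕ} (hf : f ∈ pathEndColorings L c e) : Fin.snoc (Fin.init f) e = f := by
  obtain ⟨-, -, -, rfl⟩ := mem_filter.1 hf
  exact Fin.snoc_init_self f

lemma card_pathEndColorings_succ (L : Fin (k + 2) → Finset ℕ) (c : ℕ) {e : ℕ}
    (he : e ∈ L (Fin.last (k + 1))) :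
    #(pathEndColorings L c e) =
      ∑ d ∈ (Fin.init L (Fin.last k)).erase e, #(pathEndColorings (Fin.init L) c d) := by
  rw [← card_biUnion]
  · refine card_nbij' Fin.init (Fin.snoc · e) (fun f hf => ?_) (fun g hg => ?_)
      (fun f hf => snoc_init_of_mem_pathEndColorings hf)
      (fun g _ => Fin.init_snoc (α := fun _ => ℕ) e g)
    · rw [mem_coe, ← snoc_init_of_mem_pathEndColorings hf, mem_pathEndColorings_snoc] at hf
      obtain ⟨-, hne, hg⟩ := hf
      simp only [mem_coe, mem_biUnion, mem_erase]
      exact ⟨_, ⟨hne, Fintype.mem_piFinset.1 (mem_filter.1 hg).1 _⟩, hg⟩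
    · simp only [mem_coe, mem_biUnion, mem_erase] at hg
      obtain ⟨d, ⟨hde, -⟩, hg⟩ := hg
      obtain rfl : g (Fin.last k) = d := (mem_filter.1 hg).2.2.2
      exact mem_pathEndColorings_snoc.2 ⟨he, hde, hg⟩
  · intro d _ d' _ hne
    exact disjoint_left.2 fun g hg hg' =>
      hne ((mem_filter.1 hg).2.2.2.symm.trans (mem_filter.1 hg').2.2.2)

/-- `(aₖ, bₖ)`; the truncated `m - 2` is why the closed form needs `2 ≤ m`. -/
def pathEndCounts (m : ℕ) : ℕ → ℕ × ℕ
  | 0 => (1, 0)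
  | k + 1 => ((m - 1) * (pathEndCounts m k).2,
      (pathEndCounts m k).1 + (m - 2) * (pathEndCounts m k).2)

lemma cast_pathEndCounts {m : ℕ} (hm : 2 ≤ m) (k : ℕ) :
    ((pathEndCounts m k).1 : ℚ) = (((m : ℚ) - 1) ^ k - (-1) ^ k) / m + (-1) ^ k ∧
      ((pathEndCounts m k).2 : ℚ) = (((m : ℚ) - 1) ^ k - (-1) ^ k) / m := by
  have hm0 : (m : ℚ) ≠ 0 := by positivity
  induction k with
  | zero => simp [pathEndCounts]
  | succ k ih =>
    simp only [pathEndCounts, Nat.cast_add, Nat.cast_mul, Nat.cast_sub (by omega : 1 ≤ m),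
      Nat.cast_sub hm, ih.1, ih.2]
    constructor <;> field_simp <;> ring

lemma exists_pathEndColorings_bounds {m : ℕ} (L : Fin (k + 1) → Finset ℕ)
    (hL : ∀ v, #(L v) = m) {c : ℕ} (hc : c ∈ L 0) :
    ∃ g ∈ L (Fin.last k), (pathEndCounts m k).1 ≤ #(pathEndColorings L c g) ∧
      ∀ d ∈ L (Fin.last k), d ≠ g → (pathEndCounts m k).2 ≤ #(pathEndColorings L c d) := by
  induction k with
  | zero =>
    refine ⟨c, hc, card_pos.2 ⟨fun _ => c, ?_⟩, fun _ _ _ => Nat.zero_le _⟩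
    simpa [pathEndColorings, Fin.forall_fin_one] using hc
  | succ k ih =>
    obtain ⟨g, hg, hga, hgb⟩ := ih (Fin.init L) (fun v => hL _) (by simpa [Fin.init] using hc)
    set s := Fin.init L (Fin.last k)
    set N := fun d => #(pathEndColorings (Fin.init L) c d)
    have hs : #s = m := hL _
    have hN : ∀ d ∈ s.erase g, (pathEndCounts m k).2 ≤ N d := fun d hd =>
      hgb d (mem_of_mem_erase hd) (ne_of_mem_erase hd)
    have high : ∀ e ∈ L (Fin.last (k + 1)), (e = g ∨ e ∉ s) →
        (pathEndCounts m (k + 1)).1 ≤ #(pathEndColorings L c e) := by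
      intro e he hge
      rw [card_pathEndColorings_succ L c he]
      calc (pathEndCounts m (k + 1)).1 = #(s.erase g) • (pathEndCounts m k).2 := by
            rw [card_erase_of_mem hg, hs, smul_eq_mul]; rfl
        _ ≤ ∑ d ∈ s.erase g, N d := card_nsmul_le_sum _ _ _ hN
        _ ≤ ∑ d ∈ s.erase e, N d := by
            refine sum_le_sum_of_subset ?_
            rcases hge with rfl | he
            · rfl
            · rw [erase_eq_of_notMem he]; exact erase_subset _ _
    have low : ∀ e ∈ L (Fin.last (k + 1)), e ≠ g →
        (pathEndCounts m (k + 1)).2 ≤ #(pathEndColorings L c e) := by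
      intro e he hge
      have hg' : g ∈ s.erase e := mem_erase.2 ⟨hge.symm, hg⟩
      rw [card_pathEndColorings_succ L c he, ← add_sum_erase _ _ hg']
      refine add_le_add hga ?_
      calc (m - 2) * (pathEndCounts m k).2 ≤ #((s.erase e).erase g) • (pathEndCounts m k).2 := by
            rw [smul_eq_mul, card_erase_of_mem hg', ← hs]
            have := pred_card_le_card_erase (s := s) (a := e)
            exact Nat.mul_le_mul_right _ (by omega)
        _ ≤ _ := card_nsmul_le_sum _ _ _ fun d hd =>
            hN d (erase_subset_erase _ (erase_subset _ _) hd)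
    by_cases hgL : g ∈ L (Fin.last (k + 1))
    · exact ⟨g, hgL, high g hgL (Or.inl rfl), low⟩
    · obtain ⟨g', hg'L, hg's⟩ : ∃ g' ∈ L (Fin.last (k + 1)), g' ∉ s := by
        refine not_subset.1 fun hsub => hgL ?_
        rwa [eq_of_subset_of_card_le hsub (by rw [hs, hL])]
      exact ⟨g', hg'L, high g' hg'L (Or.inr hg's),
        fun e he _ => low e he fun h => hgL (h ▸ he)⟩

end

theorem path_list_coloring_count_partition_general (k : ℕ) (m : ℕ) (hm : 2 ≤ m)
    (L : Fin (k + 1) → Finset ℕ) (hL : ∀ v, (L v).card = m) :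
    ∃ A B : Finset (ℕ × ℕ), Disjoint A B ∧ A ∪ B = (L 0) ×ˢ (L (Fin.last k)) ∧
      A.card = m ∧ B.card = m * (m - 1) ∧
      (∀ p ∈ A,
        (((m : ℚ) - 1) ^ k - (-1) ^ k) / m + (-1) ^ k ≤
          (Nat.card {f : Fin (k + 1) → ℕ // ProperLColoring (pathGraph (k + 1)) L f ∧
            f 0 = p.1 ∧ f (Fin.last k) = p.2} : ℚ)) ∧
      (∀ p ∈ B,
        (((m : ℚ) - 1) ^ k - (-1) ^ k) / m ≤
          (Nat.card {f : Fin (k + 1) → ℕ // ProperLColoring (pathGraph (k + 1)) L f ∧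
            f 0 = p.1 ∧ f (Fin.last k) = p.2} : ℚ)) := by
  choose! g hgL hgA hgB using fun c (hc : c ∈ L 0) => exists_pathEndColorings_bounds L hL hc
  obtain ⟨A, B, hAB, hunion, hA, hB, hpA, hpB⟩ := exists_partition_product_graph hgL
  have hmem : ∀ p ∈ A ∪ B, p.1 ∈ L 0 ∧ p.2 ∈ L (Fin.last k) := fun p hp =>
    mem_product.1 (hunion ▸ hp)
  refine ⟨A, B, hAB, hunion, by rw [hA, hL], by rw [hB, hL, hL], fun p hp => ?_, fun p hp => ?_⟩
  · rw [natCard_eq_card_pathEndColorings, ← (cast_pathEndCounts hm k).1, hpA p hp]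
    exact_mod_cast hgA p.1 (hmem p (mem_union_left B hp)).1
  · obtain ⟨hp1, hp2⟩ := hmem p (mem_union_right A hp)
    rw [natCard_eq_card_pathEndColorings, ← (cast_pathEndCounts hm k).2]
    exact_mod_cast hgB p.1 hp1 p.2 hp2 (hpB p hp)

theorem path_list_coloring_count_partition (k : ℕ) (hk : 1 ≤ k) (m : ℕ) (hm : 2 ≤ m)
    (L : Fin (k + 1) → Finset ℕ) (hL : ∀ v, (L v).card = m) :
    ∃ A B : Finset (ℕ × ℕ), Disjoint A B ∧ A ∪ B = (L 0) ×ˢ (L (Fin.last k)) ∧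
      A.card = m ∧ B.card = m * (m - 1) ∧
      (∀ p ∈ A,
        (((m : ℚ) - 1) ^ k - (-1) ^ k) / m + (-1) ^ k ≤
          (Nat.card {f : Fin (k + 1) → ℕ // ProperLColoring (pathGraph (k + 1)) L f ∧
            f 0 = p.1 ∧ f (Fin.last k) = p.2} : ℚ)) ∧
      (∀ p ∈ B,
        (((m : ℚ) - 1) ^ k - (-1) ^ k) / m ≤
          (Nat.card {f : Fin (k + 1) → ℕ // ProperLColoring (pathGraph (k + 1)) L f ∧
            f 0 = p.1 ∧ f (Fin.last k) = p.2} : ℚ)) :=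
  path_list_coloring_count_partition_general k m hm L hL
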